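/- arXiv:2011.03967 — 2 statements merged into one kernel-verified Lean document; each statement's English description precedes it below -/
import Mathlib

section
/- Let 1 < c < 427/400 be fixed, θ0 = 1/2 − (1/4)·e·log 2, ε = (log log X)^6/(log X)^{θ0} and Δ = X^{1/4−c}. For S(t) = Σ_{X/2 < p ≤ X} e(t p^c) log p (sum over primes p), one has ∫_{−Δ}^{Δ} |S(t)|² dt ≪ X^{2−c} (log X)³ for all sufficiently large X, with an implied constant depending only on c. -/
/-!
Expanding `|S(t)|² = Σ_{p,q} log p log q e(t (p^c - q^c))` and integrating over `[-Δ, Δ]`, the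
diagonal contributes `2Δ (log X)²` per prime, while for `p ≠ q` the oscillating term integrates to
at most `1 / (π |p^c - q^c|) ≤ 1 / ((X/2)^(c-1) |p - q|)`. Summing `1 / |p - q|` over `q` costs a
factor `O(log X)`, so the integral is `≪ X (log X)² (Δ + X^(1-c) log X) ≪ X^(2-c) (log X)³`,
as `Δ = X^(1/4-c) ≤ X^(1-c)`.
-/

open MeasureTheory

/-- `e(t) = exp(2πit)`. -/
noncomputable def e (t : ℝ) : ℂ := Complex.exp (2 * Real.pi * Complex.I * t)

/-- The primes `p` with `a < p ≤ b`. -/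
noncomputable def primesIoc (a b : ℝ) : Finset ℕ :=
  (Finset.range (⌊b⌋₊ + 1)).filter fun p => p.Prime ∧ a < (p : ℝ) ∧ (p : ℝ) ≤ b

/-- `S(t) = Σ_{X/2 < p ≤ X} e(t p^c) log p`. -/
noncomputable def S (c X t : ℝ) : ℂ :=
  ∑ p ∈ primesIoc (X / 2) X, e (t * (p : ℝ) ^ c) * (Real.log p : ℂ)

open Finset Real

lemma e_mul_conj_e (x y : ℝ) : e x * starRingEnd ℂ (e y) = e (x - y) := by
  rw [e, e, e, ← Complex.exp_conj, ← Complex.exp_add]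
  congr 1
  simp only [map_mul, Complex.conj_I, Complex.conj_ofReal, map_ofNat]
  push_cast
  ring

lemma re_e (x : ℝ) : (e x).re = cos (2 * π * x) := by
  rw [e, show 2 * π * Complex.I * (x : ℂ) = ((2 * π * x : ℝ) : ℂ) * Complex.I by push_cast; ring,
    Complex.exp_ofReal_mul_I_re]

lemma norm_sq_sum_e_mul {ι : Type*} (s : Finset ι) (a ν : ι → ℝ) (t : ℝ) :
    ‖∑ i ∈ s, e (t * ν i) * (a i : ℂ)‖ ^ 2 =
      ∑ i ∈ s, ∑ j ∈ s, a i * a j * cos (2 * π * (ν i - ν j) * t) := by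
  rw [← Complex.normSq_eq_norm_sq, ← Complex.ofReal_re (Complex.normSq _), ← Complex.mul_conj,
    map_sum, sum_mul_sum, Complex.re_sum]
  refine sum_congr rfl fun i _ => ?_
  rw [Complex.re_sum]
  refine sum_congr rfl fun j _ => ?_
  rw [map_mul, Complex.conj_ofReal, mul_mul_mul_comm, e_mul_conj_e, ← Complex.ofReal_mul,
    mul_comm, Complex.re_ofReal_mul, re_e]
  ring_nf

lemma abs_integral_cos_mul_le {k : ℝ} (hk : k ≠ 0) (a b : ℝ) :
    |∫ t in a..b, cos (k * t)| ≤ 2 / |k| := by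
  rw [intervalIntegral.integral_comp_mul_left (fun x => cos x) hk, integral_cos, smul_eq_mul,
    abs_mul, abs_inv, inv_mul_eq_div]
  gcongr
  linarith [abs_sub (sin (k * b)) (sin (k * a)), abs_sin_le_one (k * b), abs_sin_le_one (k * a)]

theorem integral_norm_sq_sum_e_mul_le {ι : Type*} [DecidableEq ι] (s : Finset ι) (a ν : ι → ℝ)
    (Δ : ℝ) (hν : Set.InjOn ν s) :
    ∫ t in -Δ..Δ, ‖∑ i ∈ s, e (t * ν i) * (a i : ℂ)‖ ^ 2 ≤
      ∑ i ∈ s, (a i ^ 2 * (2 * Δ) + ∑ j ∈ s.erase i, |a i * a j| / (π * |ν i - ν j|)) := by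
  have hint : ∀ i j, IntervalIntegrable (fun t => a i * a j * cos (2 * π * (ν i - ν j) * t))
      volume (-Δ) Δ := fun i j => (by fun_prop : Continuous _).intervalIntegrable _ _
  simp_rw [norm_sq_sum_e_mul]
  rw [intervalIntegral.integral_finsetSum fun i _ =>
    (by fun_prop : Continuous fun t => ∑ j ∈ s, a i * a j * cos (2 * π * (ν i - ν j) * t))
      |>.intervalIntegrable _ _]
  refine sum_le_sum fun i hi => ?_
  rw [intervalIntegral.integral_finsetSum fun j _ => hint i j, ← add_sum_erase s _ hi]
  gcongr with j hj
  · simp only [sub_self, mul_zero, zero_mul, cos_zero, intervalIntegral.integral_const,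
      smul_eq_mul]
    exact (by ring : _ = _).le
  · have hne : ν i - ν j ≠ 0 := sub_ne_zero.mpr fun h =>
      (ne_of_mem_erase hj).symm (hν hi (mem_of_mem_erase hj) h)
    rw [intervalIntegral.integral_const_mul]
    refine (le_abs_self _).trans ?_
    rw [abs_mul, div_eq_mul_inv]
    gcongr
    refine (abs_integral_cos_mul_le (by positivity) _ _).trans_eq ?_
    rw [abs_mul, abs_of_pos (by positivity : 0 < 2 * π)]
    field_simp

lemma rpow_sub_one_mul_sub_le_rpow_sub_rpow {c h x y : ℝ} (hc : 1 ≤ c) (h0 : 0 < h) (hx : h ≤ x)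
    (hxy : x ≤ y) : h ^ (c - 1) * (y - x) ≤ y ^ c - x ^ c := by
  have hx0 : 0 < x := h0.trans_le hx
  have hy0 : 0 < y := hx0.trans_le hxy
  have hpow : ∀ z : ℝ, 0 < z → z ^ c = z ^ (c - 1) * z := fun z hz => by
    rw [← rpow_add_one hz.ne', sub_add_cancel]
  have hhx : h ^ (c - 1) ≤ x ^ (c - 1) := rpow_le_rpow h0.le hx (by linarith)
  have hxy' : x ^ (c - 1) ≤ y ^ (c - 1) := rpow_le_rpow hx0.le hxy (by linarith)
  rw [hpow x hx0, hpow y hy0]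
  nlinarith [rpow_nonneg h0.le (c - 1)]

lemma rpow_sub_one_mul_abs_sub_le {c h u v : ℝ} (hc : 1 ≤ c) (h0 : 0 < h) (hu : h ≤ u)
    (hv : h ≤ v) : h ^ (c - 1) * |u - v| ≤ |u ^ c - v ^ c| := by
  rcases le_total u v with huv | hvu
  · rw [abs_sub_comm, abs_of_nonneg (sub_nonneg.mpr huv), abs_sub_comm]
    exact (rpow_sub_one_mul_sub_le_rpow_sub_rpow hc h0 hu huv).trans (le_abs_self _)
  · rw [abs_of_nonneg (sub_nonneg.mpr hvu)]
    exact (rpow_sub_one_mul_sub_le_rpow_sub_rpow hc h0 hv hvu).trans (le_abs_self _)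

lemma sum_erase_range_inv_abs_sub_le {p N : ℕ} (hp : p ≤ N) :
    ∑ q ∈ (range (N + 1)).erase p, |(p : ℝ) - q|⁻¹ ≤ 2 * (1 + log N) := by
  set H : ℝ := ∑ k ∈ range N, ((k : ℝ) + 1)⁻¹
  have hH : H ≤ 1 + log N := by simpa [harmonic] using harmonic_le_one_add_log N
  have hsplit : (range (N + 1)).erase p = range p ∪ Ioc p N := by
    ext q
    simp only [mem_erase, mem_range, mem_union, mem_Ioc]
    omega
  have hdisj : Disjoint (range p) (Ioc p N) :=
    disjoint_left.mpr fun q hq hq' => by simp only [mem_range, mem_Ioc] at hq hq'; omega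
  have below : ∑ q ∈ range p, |(p : ℝ) - q|⁻¹ ≤ H := by
    rw [← sum_range_reflect]
    calc ∑ k ∈ range p, |(p : ℝ) - ((p - 1 - k : ℕ) : ℝ)|⁻¹
        = ∑ k ∈ range p, ((k : ℝ) + 1)⁻¹ := sum_congr rfl fun k hk => by
          rw [mem_range] at hk
          rw [Nat.cast_sub (by omega), Nat.cast_sub (by omega)]
          push_cast
          rw [show (p : ℝ) - (p - 1 - k) = k + 1 by ring, abs_of_pos (by positivity)]
      _ ≤ H := sum_le_sum_of_subset_of_nonneg (range_subset_range.mpr hp)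
          fun _ _ _ => by positivity
  have above : ∑ q ∈ Ioc p N, |(p : ℝ) - q|⁻¹ ≤ H := by
    rw [← Ico_add_one_add_one_eq_Ioc, sum_Ico_eq_sum_range]
    calc ∑ k ∈ range (N + 1 - (p + 1)), |(p : ℝ) - ((p + 1 + k : ℕ) : ℝ)|⁻¹
        = ∑ k ∈ range (N - p), ((k : ℝ) + 1)⁻¹ := by
          rw [show N + 1 - (p + 1) = N - p by omega]
          refine sum_congr rfl fun k _ => ?_
          push_cast
          rw [show (p : ℝ) - (p + 1 + k) = -(k + 1) by ring, abs_neg, abs_of_pos (by positivity)]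
      _ ≤ H := sum_le_sum_of_subset_of_nonneg (range_subset_range.mpr (Nat.sub_le N p))
          fun _ _ _ => by positivity
  rw [hsplit, sum_union hdisj]
  linarith

lemma sum_erase_primesIoc_le {c X : ℝ} (hc : 1 ≤ c) {p : ℕ} (hp : p ∈ primesIoc (X / 2) X) :
    ∑ q ∈ (primesIoc (X / 2) X).erase p, |log p * log q| / (π * |(p : ℝ) ^ c - (q : ℝ) ^ c|) ≤
      log X ^ 2 * (2 * (1 + log X) / (X / 2) ^ (c - 1)) := by
  set P := primesIoc (X / 2) X
  set N := ⌊X⌋₊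
  have bounds : ∀ q ∈ P, X / 2 < q ∧ (q : ℝ) ≤ X ∧ q ≤ N := fun q hq => by
    obtain ⟨hqN, -, hq⟩ := mem_filter.mp hq
    exact ⟨hq.1, hq.2, Nat.lt_succ_iff.mp (mem_range.mp hqN)⟩
  obtain ⟨hpX2, hpX, hpN⟩ := bounds p hp
  have hX2 : 0 < X / 2 := by linarith
  have hlog : ∀ q ∈ P, 0 ≤ log q ∧ log q ≤ log X := fun q hq =>
    ⟨log_natCast_nonneg q, log_le_log (hX2.trans (bounds q hq).1) (bounds q hq).2.1⟩
  have term : ∀ q ∈ P.erase p, |log p * log q| / (π * |(p : ℝ) ^ c - (q : ℝ) ^ c|) ≤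
      log X ^ 2 / (X / 2) ^ (c - 1) * |(p : ℝ) - q|⁻¹ := fun q hq => by
    have hqP := mem_of_mem_erase hq
    have hgap : 0 < |(p : ℝ) - q| :=
      abs_pos.mpr (sub_ne_zero.mpr (Nat.cast_injective.ne (ne_of_mem_erase hq).symm))
    have hspread : (X / 2) ^ (c - 1) * |(p : ℝ) - q| ≤ π * |(p : ℝ) ^ c - (q : ℝ) ^ c| :=
      (rpow_sub_one_mul_abs_sub_le hc hX2 hpX2.le (bounds q hqP).1.le).trans
        (le_mul_of_one_le_left (abs_nonneg _) (by linarith [pi_gt_three]))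
    rw [← div_eq_mul_inv, div_div]
    refine div_le_div₀ (sq_nonneg _) ?_ (by positivity) hspread
    rw [abs_mul, abs_of_nonneg (hlog p hp).1, abs_of_nonneg (hlog q hqP).1, sq]
    exact mul_le_mul (hlog p hp).2 (hlog q hqP).2 (hlog q hqP).1 ((hlog p hp).1.trans (hlog p hp).2)
  have hharm : ∑ q ∈ P.erase p, |(p : ℝ) - q|⁻¹ ≤ 2 * (1 + log X) := by
    refine (sum_le_sum_of_subset_of_nonneg (erase_subset_erase p fun q hq => ?_)
      fun _ _ _ => by positivity).trans ((sum_erase_range_inv_abs_sub_le hpN).trans ?_)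
    · exact mem_range.mpr (Nat.lt_succ_of_le (bounds q hq).2.2)
    · have hN : (0 : ℝ) < N := (hX2.trans hpX2).trans_le (by exact_mod_cast hpN)
      gcongr
      exact Nat.floor_le (by linarith)
  calc _ ≤ ∑ q ∈ P.erase p, log X ^ 2 / (X / 2) ^ (c - 1) * |(p : ℝ) - q|⁻¹ := sum_le_sum term
    _ = log X ^ 2 / (X / 2) ^ (c - 1) * ∑ q ∈ P.erase p, |(p : ℝ) - q|⁻¹ := (mul_sum ..).symm
    _ ≤ log X ^ 2 / (X / 2) ^ (c - 1) * (2 * (1 + log X)) := by gcongr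
    _ = _ := by ring

lemma integral_norm_sq_S_le {c X : ℝ} (hc : 1 ≤ c) (hX : 1 ≤ X) {Δ : ℝ} (hΔ : 0 ≤ Δ) :
    ∫ t in -Δ..Δ, ‖S c X t‖ ^ 2 ≤
      (X + 1) * (log X ^ 2 * (2 * Δ + 2 * (1 + log X) / (X / 2) ^ (c - 1))) := by
  set P := primesIoc (X / 2) X
  have hinj : Set.InjOn (fun p : ℕ => (p : ℝ) ^ c) P := fun p _ q _ h =>
    Nat.cast_injective ((rpow_left_inj (Nat.cast_nonneg p) (Nat.cast_nonneg q) (by linarith)).mp h)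
  have hcard : (#P : ℝ) ≤ X + 1 := by
    have := card_le_card (filter_subset _ _ : P ⊆ range (⌊X⌋₊ + 1))
    rw [card_range] at this
    have hP : (#P : ℝ) ≤ ⌊X⌋₊ + 1 := by exact_mod_cast this
    linarith [Nat.floor_le (by linarith : 0 ≤ X)]
  have hrow : ∀ p ∈ P, log p ^ 2 * (2 * Δ) + ∑ q ∈ P.erase p,
      |log p * log q| / (π * |(p : ℝ) ^ c - (q : ℝ) ^ c|) ≤
        log X ^ 2 * (2 * Δ + 2 * (1 + log X) / (X / 2) ^ (c - 1)) := fun p hp => by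
    have hpX : log p ≤ log X := by
      obtain ⟨-, -, hpX2, hpX⟩ := mem_filter.mp hp
      exact log_le_log (by linarith) hpX
    rw [mul_add]
    gcongr
    exact sum_erase_primesIoc_le hc hp
  calc _ ≤ _ := integral_norm_sq_sum_e_mul_le P (fun p => log p) (fun p => (p : ℝ) ^ c) Δ hinj
    _ ≤ #P • (log X ^ 2 * (2 * Δ + 2 * (1 + log X) / (X / 2) ^ (c - 1))) :=
      sum_le_card_nsmul _ _ _ hrow
    _ ≤ _ := by
      have hlog : 0 ≤ log X := log_nonneg hX
      rw [nsmul_eq_mul]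
      gcongr

theorem stmt_3_general (c : ℝ) (hc1 : 1 < c) :
    ∃ C : ℝ, 0 < C ∧ ∃ X0 : ℝ, ∀ X : ℝ, X0 ≤ X →
      (∫ t in (-(X ^ (1 / 4 - c)))..(X ^ (1 / 4 - c)), ‖S c X t‖ ^ 2)
        ≤ C * X ^ (2 - c) * Real.log X ^ 3 := by
  refine ⟨4 + 8 * 2 ^ (c - 1), by positivity, 3, fun X hX => ?_⟩
  have hX0 : 0 < X := by linarith
  have hL : 1 ≤ log X := by
    rw [le_log_iff_exp_le hX0]
    linarith [exp_one_lt_d9]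
  have hY : 0 < X ^ (1 - c) := rpow_pos_of_pos hX0 _
  have hΔ : X ^ (1 / 4 - c) ≤ X ^ (1 - c) * log X :=
    (rpow_le_rpow_of_exponent_le (by linarith) (by linarith)).trans
      (le_mul_of_one_le_right hY.le hL)
  have hinv : ((X / 2) ^ (c - 1))⁻¹ = 2 ^ (c - 1) * X ^ (1 - c) := by
    rw [div_rpow hX0.le zero_le_two, inv_div, show 1 - c = -(c - 1) by ring, rpow_neg hX0.le,
      div_eq_mul_inv]
  have hX2c : X ^ (2 - c) = X * X ^ (1 - c) := by
    rw [show 2 - c = 1 + (1 - c) by ring, rpow_add hX0, rpow_one]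
  calc _ ≤ (X + 1) * (log X ^ 2 * (2 * X ^ (1 / 4 - c) + 2 * (1 + log X) / (X / 2) ^ (c - 1))) :=
        integral_norm_sq_S_le hc1.le (by linarith) (by positivity)
    _ ≤ (2 * X) * (log X ^ 2 * (2 * (X ^ (1 - c) * log X)
          + 2 * (2 * log X) * (2 ^ (c - 1) * X ^ (1 - c)))) := by
        rw [div_eq_mul_inv (2 * (1 + log X)), hinv]
        gcongr <;> linarith
    _ = (4 + 8 * 2 ^ (c - 1)) * X ^ (2 - c) * log X ^ 3 := by
        rw [hX2c]
        ring

/-- For fixed `1 < c < 427/400` and `Δ = X^(1/4−c)`,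
`∫_{−Δ}^{Δ} |S(t)|² dt ≪ X^(2−c) (log X)³` for all sufficiently large `X`. -/
theorem stmt_3 (c : ℝ) (hc1 : 1 < c) (hc2 : c < 427 / 400) :
    ∃ C : ℝ, 0 < C ∧ ∃ X0 : ℝ, ∀ X : ℝ, X0 ≤ X →
      (∫ t in (-(X ^ (1 / 4 - c)))..(X ^ (1 / 4 - c)), ‖S c X t‖ ^ 2)
        ≤ C * X ^ (2 - c) * Real.log X ^ 3 :=
  stmt_3_general c hc1
end

section
/- Let 1 < c < 427/400 be fixed and Δ = X^{1/4−c}. For I(t) = ∫_{X/2}^{X} e(t y^c) dy, one has ∫_{−Δ}^{Δ} |I(t)|² dt ≪ X^{2−c} log X for all sufficiently large X, with an implied constant depending only on c. -/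
open MeasureTheory

/-- `I(t) = ∫_{X/2}^{X} e(t y^c) dy`. -/
noncomputable def I (c X t : ℝ) : ℂ := ∫ y in (X / 2)..X, e (t * y ^ c)

/-!
For `t > 0` write `e(t y^c) = g(y) · (d/dy) (-i e(t y^c))` with `g(y) = y^(1-c) / (2π c t)`,
which is positive and decreasing on `[X/2, X]`; integration by parts then gives the
first-derivative bound `|I(t)| ≤ (X/2)^(1-c) / (π c t)`, while trivially `|I(t)| ≤ X/2`.
As `|I|` is even, splitting `[0, Δ]` at `X^(-c)` bounds the integral by
`X^(-c) (X/2)^2 + O(X^(2-2c)) X^c = O(X^(2-c))`.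
-/

open Set intervalIntegral Real

theorem norm_integral_ofReal_mul_deriv_le {a b : ℝ} (hab : a ≤ b) {g g' : ℝ → ℝ}
    {v v' : ℝ → ℂ}
    (hg : ∀ y ∈ Icc a b, HasDerivAt g (g' y) y) (hv : ∀ y ∈ Icc a b, HasDerivAt v (v' y) y)
    (hg'_int : IntervalIntegrable g' volume a b) (hv'_int : IntervalIntegrable v' volume a b)
    (hg'_nonpos : ∀ y ∈ Icc a b, g' y ≤ 0) (hgb : 0 ≤ g b) (hv_le : ∀ y ∈ Icc a b, ‖v y‖ ≤ 1) :
    ‖∫ y in a..b, (g y : ℂ) * v' y‖ ≤ 2 * g a := by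
  rw [← uIcc_of_le hab] at hg hv
  have hdecrease : ∫ y in a..b, -g' y = g a - g b := by
    rw [intervalIntegral.integral_neg, integral_eq_sub_of_hasDerivAt hg hg'_int, neg_sub]
  have hgba : g b ≤ g a := by
    rw [← sub_nonneg, ← hdecrease]
    exact integral_nonneg hab fun y hy => neg_nonneg.2 (hg'_nonpos y hy)
  have hbound : ‖∫ y in a..b, (g' y : ℂ) * v y‖ ≤ g a - g b := by
    rw [← hdecrease]
    refine norm_integral_le_of_norm_le hab (Filter.Eventually.of_forall fun y hy => ?_)
      hg'_int.neg
    have hy : y ∈ Icc a b := Ioc_subset_Icc_self hy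
    rw [norm_mul, Complex.norm_real, Real.norm_eq_abs, abs_of_nonpos (hg'_nonpos y hy)]
    exact mul_le_of_le_one_right (neg_nonneg.2 (hg'_nonpos y hy)) (hv_le y hy)
  have hend (y : ℝ) (hy : y ∈ Icc a b) (hgy : 0 ≤ g y) : ‖(g y : ℂ) * v y‖ ≤ g y := by
    rw [norm_mul, Complex.norm_real, Real.norm_of_nonneg hgy]
    exact mul_le_of_le_one_right hgy (hv_le y hy)
  rw [integral_mul_deriv_eq_deriv_mul (fun y hy => (hg y hy).ofReal_comp) hv
    ⟨hg'_int.1.ofReal, hg'_int.2.ofReal⟩ hv'_int]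
  calc _ ≤ ‖(g b : ℂ) * v b‖ + ‖(g a : ℂ) * v a‖ + ‖∫ y in a..b, (g' y : ℂ) * v y‖ :=
        norm_sub_le_of_le (norm_sub_le _ _) le_rfl
    _ ≤ g b + g a + (g a - g b) := by
        gcongr
        · exact hend b (right_mem_Icc.2 hab) hgb
        · exact hend a (left_mem_Icc.2 hab) (hgb.trans hgba)
    _ = 2 * g a := by ring

theorem integral_eq_two_mul_integral_of_even {f : ℝ → ℝ} (hf : Continuous f)
    (heven : ∀ t, f (-t) = f t) (a : ℝ) : ∫ t in -a..a, f t = 2 * ∫ t in 0..a, f t := by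
  have hneg : ∫ t in -a..0, f t = ∫ t in 0..a, f t := by
    simpa [heven] using (integral_comp_neg (a := 0) (b := a) f).symm
  rw [← integral_add_adjacent_intervals (b := 0) (hf.intervalIntegrable _ _)
    (hf.intervalIntegrable _ _), hneg, two_mul]

theorem intervalIntegrable_div_sq (B : ℝ) {a b : ℝ} (h : (0 : ℝ) ∉ uIcc a b) :
    IntervalIntegrable (fun t => B / t ^ 2) volume a b :=
  (continuousOn_const.div (continuousOn_pow 2) fun _ ht =>
    pow_ne_zero 2 (ne_of_mem_of_not_mem ht h)).intervalIntegrable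

theorem integral_div_sq_le {B ε Δ : ℝ} (hB : 0 ≤ B) (hε : 0 < ε) (hεΔ : ε ≤ Δ) :
    ∫ t in ε..Δ, B / t ^ 2 ≤ B / ε := by
  have hpos : ∀ t ∈ uIcc ε Δ, 0 < t := fun t ht => hε.trans_le (uIcc_of_le hεΔ ▸ ht).1
  have hderiv : ∀ t ∈ uIcc ε Δ, HasDerivAt (fun t => -B / t) (B / t ^ 2) t := fun t ht => by
    simpa [div_eq_mul_inv] using (hasDerivAt_inv (hpos t ht).ne').const_mul (-B)
  rw [integral_eq_sub_of_hasDerivAt hderiv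
    (intervalIntegrable_div_sq B fun h => (hpos 0 h).false)]
  have : 0 ≤ B / Δ := div_nonneg hB (hε.le.trans hεΔ)
  linarith [neg_div Δ B, neg_div ε B]

theorem integral_le_of_le_of_le_div_sq {f : ℝ → ℝ} {A B ε Δ : ℝ}
    (hf : IntervalIntegrable f volume 0 Δ) (hB : 0 ≤ B) (hε : 0 < ε) (hεΔ : ε ≤ Δ)
    (hfA : ∀ t ∈ Icc 0 ε, f t ≤ A) (hfB : ∀ t ∈ Icc ε Δ, f t ≤ B / t ^ 2) :
    ∫ t in 0..Δ, f t ≤ ε * A + B / ε := by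
  have hε_mem : ε ∈ uIcc 0 Δ := by rw [uIcc_of_le (hε.le.trans hεΔ)]; exact ⟨hε.le, hεΔ⟩
  have hf₁ : IntervalIntegrable f volume 0 ε := hf.mono_set (uIcc_subset_uIcc_left hε_mem)
  have hf₂ : IntervalIntegrable f volume ε Δ := hf.mono_set (uIcc_subset_uIcc_right hε_mem)
  rw [← integral_add_adjacent_intervals hf₁ hf₂]
  gcongr
  · calc ∫ t in 0..ε, f t ≤ ∫ _ in 0..ε, A :=
          integral_mono_on hε.le hf₁ intervalIntegrable_const hfA
      _ = ε * A := by simp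
  · have h0 : (0 : ℝ) ∉ uIcc ε Δ := notMem_uIcc_of_lt hε (hε.trans_le hεΔ)
    exact (integral_mono_on hεΔ hf₂ (intervalIntegrable_div_sq B h0) hfB).trans
      (integral_div_sq_le hB hε hεΔ)

theorem norm_e (x : ℝ) : ‖e x‖ = 1 := by
  rw [e, show 2 * (π : ℂ) * Complex.I * x = ((2 * π * x : ℝ) : ℂ) * Complex.I by
    push_cast; ring, Complex.norm_exp_ofReal_mul_I]

theorem continuous_e : Continuous e := by
  unfold e; fun_prop

theorem hasDerivAt_e (x : ℝ) : HasDerivAt e (2 * π * Complex.I * e x) x := by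
  convert ((hasDerivAt_id x).ofReal_comp.const_mul (2 * (π : ℂ) * Complex.I)).cexp using 1
  · rfl
  · simp only [e, id, Complex.ofReal_one, mul_one]; ring

theorem hasDerivAt_e_mul_rpow (t c : ℝ) {y : ℝ} (hy : 0 < y) :
    HasDerivAt (fun y => e (t * y ^ c))
      ((t * (c * y ^ (c - 1)) : ℝ) • (2 * π * Complex.I * e (t * y ^ c))) y :=
  (hasDerivAt_e _).scomp y ((hasDerivAt_rpow_const (Or.inl hy.ne')).const_mul t)

theorem norm_integral_e_mul_rpow_le {c a b t : ℝ} (hc : 1 ≤ c) (ha : 0 < a) (hab : a ≤ b)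
    (ht : 0 < t) : ‖∫ y in a..b, e (t * y ^ c)‖ ≤ a ^ (1 - c) / (π * c * t) := by
  have hc0 : 0 < c := one_pos.trans_le hc
  have hκ : 0 < 2 * π * c * t := by positivity
  have hpos : ∀ y ∈ Icc a b, 0 < y := fun y hy => ha.trans_le hy.1
  have hg : ∀ y ∈ Icc a b, HasDerivAt (fun y => y ^ (1 - c) / (2 * π * c * t))
      ((1 - c) * y ^ (-c) / (2 * π * c * t)) y := fun y hy => by
    simpa using (hasDerivAt_rpow_const (p := 1 - c) (Or.inl (hpos y hy).ne')).div_const _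
  have hg'_int :
      IntervalIntegrable (fun y => (1 - c) * y ^ (-c) / (2 * π * c * t)) volume a b :=
    ((continuousOn_const.mul (continuousOn_id.rpow_const fun y hy =>
      Or.inl (hpos y hy).ne')).div_const _).intervalIntegrable_of_Icc hab
  have hv'_int : IntervalIntegrable (fun y : ℝ =>
      -Complex.I * ((t * (c * y ^ (c - 1)) : ℝ) • (2 * π * Complex.I * e (t * y ^ c))))
      volume a b := by
    have := Real.continuous_rpow_const (sub_nonneg.2 hc)
    have := Real.continuous_rpow_const hc0.le
    have := continuous_e
    exact Continuous.intervalIntegrable (by fun_prop) _ _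
  have hfactor : EqOn (fun y => e (t * y ^ c))
      (fun y => ((y ^ (1 - c) / (2 * π * c * t) : ℝ) : ℂ) *
        (-Complex.I * ((t * (c * y ^ (c - 1)) : ℝ) • (2 * π * Complex.I * e (t * y ^ c)))))
      (uIcc a b) := by
    intro y hy
    have hy0 : 0 < y := hpos y (uIcc_of_le hab ▸ hy)
    have hrpow : ((y ^ (1 - c) : ℝ) : ℂ) * ((y ^ (c - 1) : ℝ) : ℂ) = 1 := by
      rw [← Complex.ofReal_mul, ← rpow_add hy0]; simp
    have hκ' : (2 * π * c * t : ℂ) ≠ 0 := by exact_mod_cast hκ.ne'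
    calc e (t * y ^ c) = ((y ^ (1 - c) : ℝ) : ℂ) * ((y ^ (c - 1) : ℝ) : ℂ) *
          ((2 * π * c * t : ℂ) / (2 * π * c * t)) * -(Complex.I * Complex.I) * e (t * y ^ c) := by
          rw [hrpow, div_self hκ', Complex.I_mul_I]; ring
      _ = _ := by simp only [Complex.real_smul]; push_cast; ring
  rw [integral_congr hfactor]
  convert norm_integral_ofReal_mul_deriv_le hab hg
    (fun y hy => (hasDerivAt_e_mul_rpow t c (hpos y hy)).const_mul (-Complex.I)) hg'_int hv'_int
    (fun y hy => div_nonpos_of_nonpos_of_nonneg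
      (mul_nonpos_of_nonpos_of_nonneg (by linarith) (rpow_nonneg (hpos y hy).le _)) hκ.le)
    (div_nonneg (rpow_nonneg (ha.le.trans hab) _) hκ.le)
    (fun y _ => by rw [norm_mul, norm_neg, Complex.norm_I, one_mul, norm_e]) using 1
  field_simp

theorem e_neg (x : ℝ) : e (-x) = (starRingEnd ℂ) (e x) := by
  simp only [e, ← Complex.exp_conj, map_mul, Complex.conj_ofReal, Complex.conj_I, map_ofNat]
  push_cast; ring_nf

theorem norm_I_neg (c X t : ℝ) : ‖I c X (-t)‖ = ‖I c X t‖ := by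
  simp only [I, neg_mul, e_neg, intervalIntegral_conj, Complex.norm_conj]

theorem continuous_I {c : ℝ} (hc : 0 ≤ c) (X : ℝ) : Continuous (I c X) := by
  have := Real.continuous_rpow_const hc
  have := continuous_e
  exact continuous_parametric_intervalIntegral_of_continuous' (by fun_prop) _ _

theorem norm_I_le (c : ℝ) {X : ℝ} (hX : 0 ≤ X) (t : ℝ) : ‖I c X t‖ ≤ X / 2 := by
  have := norm_integral_le_of_norm_le_const (a := X / 2) (b := X) (C := 1)
    (f := fun y => e (t * y ^ c)) fun y _ => (norm_e _).le
  rwa [one_mul, abs_of_nonneg (by linarith), sub_half] at this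

theorem norm_I_le_div {c X t : ℝ} (hc : 1 ≤ c) (hX : 0 < X) (ht : 0 < t) :
    ‖I c X t‖ ≤ 2 ^ (c - 1) / (π * c) * X ^ (1 - c) / t := by
  refine (norm_integral_e_mul_rpow_le hc (half_pos hX) (half_le_self hX.le) ht).trans_eq ?_
  rw [div_rpow hX.le zero_le_two, show c - 1 = -(1 - c) by ring, rpow_neg zero_le_two]
  field_simp

theorem integral_norm_I_sq_le {c X Δ : ℝ} (hc : 1 ≤ c) (hX : 0 < X) (hΔ : X ^ (-c) ≤ Δ) :
    ∫ t in -Δ..Δ, ‖I c X t‖ ^ 2 ≤ (1 / 2 + 2 * (2 ^ (c - 1) / (π * c)) ^ 2) * X ^ (2 - c) := by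
  set K := 2 ^ (c - 1) / (π * c)
  have hε : 0 < X ^ (-c) := rpow_pos_of_pos hX _
  have hcont : Continuous fun t => ‖I c X t‖ ^ 2 := (continuous_I (by linarith) X).norm.pow 2
  have hsplit := integral_le_of_le_of_le_div_sq (A := (X / 2) ^ 2)
    (B := (K * X ^ (1 - c)) ^ 2)
    (hcont.intervalIntegrable 0 Δ) (sq_nonneg _) hε hΔ
    (fun t _ => pow_le_pow_left₀ (norm_nonneg _) (norm_I_le c hX.le t) 2)
    (fun t ht => by
      rw [← div_pow]
      exact pow_le_pow_left₀ (norm_nonneg _) (norm_I_le_div hc hX (hε.trans_le ht.1)) 2)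
  have hX2 : X ^ 2 = X ^ (2 - c) / X ^ (-c) := by
    rw [← rpow_sub hX, ← rpow_two]; ring_nf
  have hX1c : (X ^ (1 - c)) ^ 2 = X ^ (2 - c) * X ^ (-c) := by
    rw [← rpow_natCast, ← rpow_mul hX.le, ← rpow_add hX]; ring_nf
  rw [integral_eq_two_mul_integral_of_even hcont fun t => by rw [norm_I_neg]]
  calc 2 * ∫ t in 0..Δ, ‖I c X t‖ ^ 2
      ≤ 2 * (X ^ (-c) * (X / 2) ^ 2 + (K * X ^ (1 - c)) ^ 2 / X ^ (-c)) :=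
        mul_le_mul_of_nonneg_left hsplit zero_le_two
    _ = (1 / 2 + 2 * K ^ 2) * X ^ (2 - c) := by
      rw [div_pow, mul_pow, hX2, hX1c]; field_simp

theorem stmt_4_general (c : ℝ) (hc1 : 1 < c) :
    ∃ C : ℝ, 0 < C ∧ ∃ X0 : ℝ, ∀ X : ℝ, X0 ≤ X →
      (∫ t in (-(X ^ (1 / 4 - c)))..(X ^ (1 / 4 - c)), ‖I c X t‖ ^ 2)
        ≤ C * X ^ (2 - c) * Real.log X := by
  refine ⟨1 / 2 + 2 * (2 ^ (c - 1) / (π * c)) ^ 2, by positivity, 3, fun X hX => ?_⟩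
  have hX0 : 0 < X := by linarith
  have hlog : 1 ≤ log X := by
    rw [le_log_iff_exp_le hX0]
    linarith [exp_one_lt_d9]
  have hΔ : X ^ (-c) ≤ X ^ (1 / 4 - c) := rpow_le_rpow_of_exponent_le (by linarith) (by linarith)
  calc _ ≤ (1 / 2 + 2 * (2 ^ (c - 1) / (π * c)) ^ 2) * X ^ (2 - c) :=
        integral_norm_I_sq_le hc1.le hX0 hΔ
    _ ≤ _ := le_mul_of_one_le_right (by positivity) hlog

/-- For fixed `1 < c < 427/400` and `Δ = X^(1/4−c)`,
`∫_{−Δ}^{Δ} |I(t)|² dt ≪ X^(2−c) log X` for all sufficiently large `X`. -/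
theorem stmt_4 (c : ℝ) (hc1 : 1 < c) (hc2 : c < 427 / 400) :
    ∃ C : ℝ, 0 < C ∧ ∃ X0 : ℝ, ∀ X : ℝ, X0 ≤ X →
      (∫ t in (-(X ^ (1 / 4 - c)))..(X ^ (1 / 4 - c)), ‖I c X t‖ ^ 2)
        ≤ C * X ^ (2 - c) * Real.log X :=
  stmt_4_general c hc1
end
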